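/- Let ε' ∈ (0, 6], let x be a fractional matching in a graph G=(V,E), let δ > 0, and let y be a bounded (ε', δ)-coarsening of x. Then z := y/(1+ε') is a fractional matching (z(v) ≤ 1 for all v) whose nonzero entries are all at least δ/(1+ε'), and d^{15ε'}_V(x, z) ≤ 15ε'·‖x‖ + 15ε'. -/
import Mathlib


open Finset

variable {V : Type*} [Fintype V] [DecidableEq V]

/-- The fractional degree `x(v) := Σ_{e ∋ v} x_e` of a vertex `v` under `x`. -/
noncomputable def fracDeg (x : Sym2 V → ℝ) (v : V) : ℝ :=
  ∑ e : Sym2 V, if v ∈ e then x e else 0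

/-- `‖x‖ := Σ_e x_e`. -/
noncomputable def vnorm (x : Sym2 V → ℝ) : ℝ :=
  ∑ e : Sym2 V, x e

/-- `d^ε_V(x,y) := Σ_{v∈V} max(|x(v) − y(v)| − ε, 0)`. -/
noncomputable def dV (ε : ℝ) (x y : Sym2 V → ℝ) : ℝ :=
  ∑ v : V, max (|fracDeg x v - fracDeg y v| - ε) 0

/-- `x'` is an `(ε,δ)`-coarsening of `x`: `x' ∈ ℝ_{≥0}^E` with
(C0) `supp(x') ⊆ supp(x)`; (C1) `|‖x‖ − ‖x'‖| ≤ ε‖x‖ + ε`; (C2) `d^ε_V(x,x') ≤ ε‖x‖ + ε`;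
(C3) `x'_e ∈ {0} ∪ [δ, 2δ)` whenever `x_e < δ`, and `x'_e = x_e` whenever `x_e ≥ δ`. -/
def IsCoarsening (ε δ : ℝ) (x x' : Sym2 V → ℝ) : Prop :=
  (∀ e, 0 ≤ x' e) ∧
  (∀ e, x' e ≠ 0 → x e ≠ 0) ∧
  |vnorm x - vnorm x'| ≤ ε * vnorm x + ε ∧
  dV ε x x' ≤ ε * vnorm x + ε ∧
  (∀ e, x e < δ → x' e = 0 ∨ (δ ≤ x' e ∧ x' e < 2 * δ)) ∧
  (∀ e, δ ≤ x e → x' e = x e)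

/-- A coarsening is bounded if additionally (C4) `x'(v) ≤ x(v) + ε` for every vertex `v`. -/
def IsBoundedCoarsening (ε δ : ℝ) (x x' : Sym2 V → ℝ) : Prop :=
  IsCoarsening ε δ x x' ∧ ∀ v : V, fracDeg x' v ≤ fracDeg x v + ε

/-- Let `ε' ∈ (0, 6]`, let `x` be a fractional matching in `G = (V,E)`, let `δ > 0`, and let
`y` be a bounded `(ε', δ)`-coarsening of `x`.  Then `z := y/(1+ε')` is a fractional matching
(`z(v) ≤ 1` for all `v`) whose nonzero entries are all at least `δ/(1+ε')`, and
`d^{15ε'}_V(x, z) ≤ 15ε'·‖x‖ + 15ε'`. -/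
theorem stmt_15 (G : SimpleGraph V) (ε' δ : ℝ) (hε'0 : 0 < ε') (hε'6 : ε' ≤ 6) (hδ : 0 < δ)
    (x y : Sym2 V → ℝ)
    (hxnn : ∀ e, 0 ≤ x e) (hsupp : ∀ e, x e ≠ 0 → e ∈ G.edgeSet)
    (hfm : ∀ v, fracDeg x v ≤ 1)
    (hy : IsBoundedCoarsening ε' δ x y)
    (z : Sym2 V → ℝ) (hz : ∀ e, z e = y e / (1 + ε')) :
    (∀ v, fracDeg z v ≤ 1) ∧
    (∀ e, z e ≠ 0 → δ / (1 + ε') ≤ z e) ∧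
    dV (15 * ε') x z ≤ 15 * ε' * vnorm x + 15 * ε' := by
  obtain ⟨⟨hynn, hsupp', hnorm, hdv, hc3, hc3'⟩, hc4⟩ := hy
  have h1 : (0:ℝ) < 1 + ε' := by linarith
  have hzdeg : ∀ v, fracDeg z v = fracDeg y v / (1 + ε') := by
    intro v
    simp only [fracDeg]
    rw [Finset.sum_div]
    refine Finset.sum_congr rfl fun e _ => ?_
    rw [hz]
    split <;> simp
  have hydegnn : ∀ v, 0 ≤ fracDeg y v := fun v => by
    unfold fracDeg
    refine Finset.sum_nonneg fun e _ => ?_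
    split
    · exact hynn e
    · exact le_refl 0
  refine ⟨?_, ?_, ?_⟩
  · intro v
    rw [hzdeg, div_le_one h1]
    have := hc4 v
    have := hfm v
    linarith
  · intro e hne
    rw [hz] at hne ⊢
    have hy0 : y e ≠ 0 := fun h => hne (by simp [h])
    have hδy : δ ≤ y e := by
      rcases lt_or_ge (x e) δ with h | h
      · rcases hc3 e h with h0 | ⟨h1', _⟩
        · exact absurd h0 hy0
        · exact h1'
      · rw [hc3' e h]; exact h
    gcongr
  · have key : ∀ v, max (|fracDeg x v - fracDeg z v| - 15*ε') 0 ≤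
        max (|fracDeg x v - fracDeg y v| - ε') 0 := by
      intro v
      have hyv : fracDeg y v ≤ 1 + ε' := le_trans (hc4 v) (by linarith [hfm v])
      have hze : fracDeg x v - fracDeg z v =
          (fracDeg x v - fracDeg y v) + fracDeg y v * (ε'/(1+ε')) := by
        rw [hzdeg]; field_simp; ring
      have h2 : |fracDeg x v - fracDeg z v| ≤ |fracDeg x v - fracDeg y v| + ε' := by
        rw [hze]
        refine le_trans (abs_add_le _ _) ?_
        have h3 : |fracDeg y v * (ε'/(1+ε'))| ≤ ε' := by
          have hq : (0:ℝ) ≤ ε'/(1+ε') := by positivity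
          rw [abs_of_nonneg (mul_nonneg (hydegnn v) hq)]
          calc fracDeg y v * (ε'/(1+ε')) ≤ (1+ε') * (ε'/(1+ε')) :=
                mul_le_mul_of_nonneg_right hyv hq
            _ = ε' := by field_simp
        linarith
      exact max_le_max (by linarith) le_rfl
    have hsum : dV (15 * ε') x z ≤ dV ε' x y :=
      Finset.sum_le_sum fun v _ => key v
    have hvx : 0 ≤ vnorm x := Finset.sum_nonneg fun e _ => hxnn e
    nlinarith [hdv]
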